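/- arXiv:1905.08783 — 5 statements merged into one kernel-verified Lean document; each statement's English description precedes it below -/
import Mathlib

section
/- Suppose the reachability Gramian W_r(t₀,t₁) = Σ_{t=t₀}^{t₁−1} A^{t₁−t−1} * B * Bᵀ * (Aᵀ)^{t₁−t−1} is U-positive definite. Then for any initial state X₀ at time t₀ and any target state X₁, there exists a control sequence U_t steering the system X_{t+1} = A*X_t + B*U_t from X_{t₀} = X₀ to X_{t₁} = X₁; specifically, U_t = Bᵀ * (Aᵀ)^{t₁−t−1} * W_r(t₀,t₁)^{−1} * (X₁ − A^{t₁−t₀} * X₀) achieves this. -/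
open scoped BigOperators

/-- Multi-index for an `N`-dimensional shape `J`. -/
abbrev MIdx {N : ℕ} (J : Fin N → ℕ) := ∀ n, Fin (J n)

/-- An even-order paired tensor of shape `J₁×I₁×⋯×J_N×I_N`, viewed with its
index pairs grouped: entry `A j i = A_{j₁ i₁ … j_N i_N}`. -/
abbrev PTensor {N : ℕ} (R : Type) (J I : Fin N → ℕ) := MIdx J → MIdx I → R

/-- The Einstein product of even-order paired tensors. -/
def einstein {N : ℕ} {R : Type} [CommRing R] {J K I : Fin N → ℕ}
    (A : PTensor R J K) (B : PTensor R K I) : PTensor R J I :=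
  fun j i => ∑ k : MIdx K, A j k * B k i

/-- The U-transpose, swapping each index pair. -/
def transp {N : ℕ} {R : Type} [CommRing R] {J I : Fin N → ℕ}
    (A : PTensor R J I) : PTensor R I J :=
  fun i j => A j i

/-- The U-identity tensor. -/
def uid {N : ℕ} (R : Type) [CommRing R] (J : Fin N → ℕ) : PTensor R J J :=
  fun j i => if j = i then 1 else 0

/-- Einstein-product powers `A^k`. -/
def epow {N : ℕ} {R : Type} [CommRing R] {J : Fin N → ℕ}
    (A : PTensor R J J) : ℕ → PTensor R J J
  | 0 => uid R J
  | (k+1) => einstein A (epow A k)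

/-- Action of an even-order paired tensor on an `N`-th order tensor
(the Einstein product `A * x`). -/
def mulE {N : ℕ} {R : Type} [CommRing R] {J I : Fin N → ℕ}
    (A : PTensor R J I) (x : MIdx I → R) : MIdx J → R :=
  fun j => ∑ i, A j i * x i

/-- Frobenius norm of an `N`-th order tensor. -/
noncomputable def fro {N : ℕ} {J : Fin N → ℕ} (x : MIdx J → ℝ) : ℝ :=
  Real.sqrt (∑ j, x j ^ 2)

/-- The scalar `xᵀ * A * y` (Einstein products). -/
def bilin {N : ℕ} {J : Fin N → ℕ} (A : PTensor ℝ J J)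
    (x y : MIdx J → ℝ) : ℝ :=
  ∑ j, ∑ i, x j * A j i * y i

/-- U-positive definiteness: `Xᵀ * A * X > 0` for all nonzero `X`. -/
def UPosDef {N : ℕ} {J : Fin N → ℕ} (A : PTensor ℝ J J) : Prop :=
  ∀ x : MIdx J → ℝ, x ≠ 0 → 0 < bilin A x x

/-- The mixed-radix index linearization (0-based version of
`ivec(j,𝒥) = j₁ + Σ_{k≥2} (j_k − 1)∏_{l<k} J_l`). -/
def ivec {N : ℕ} (J : Fin N → ℕ) (j : MIdx J) : ℕ :=
  ∑ k, (j k : ℕ) * ∏ l ∈ Finset.Iio k, J l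

/-- The unfolding map `φ`: the matrix whose `(ivec j, ivec i)` entry is `A j i`. -/
noncomputable def phi {N : ℕ} {J I : Fin N → ℕ} (A : PTensor ℝ J I) :
    Matrix (Fin (∏ n, J n)) (Fin (∏ n, I n)) ℝ :=
  fun p q => ∑ j : MIdx J, ∑ i : MIdx I,
    if ivec J j = (p : ℕ) ∧ ivec I i = (q : ℕ) then A j i else 0

/-- The reachability Gramian `W_r(t₀,t₁) = Σ_{t=t₀}^{t₁−1} A^{t₁−t−1} * B * Bᵀ * (Aᵀ)^{t₁−t−1}`. -/
def reachGramian {N : ℕ} {J K : Fin N → ℕ}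
    (A : PTensor ℝ J J) (B : PTensor ℝ J K) (t₀ t₁ : ℕ) : PTensor ℝ J J :=
  ∑ t ∈ Finset.Icc t₀ (t₁ - 1),
    einstein (epow A (t₁ - t - 1))
      (einstein B (einstein (transp B) (epow (transp A) (t₁ - t - 1))))

section AuxLemmas

variable {N : ℕ} {J K L : Fin N → ℕ}

lemma mulE_einstein (A : PTensor ℝ J K) (B : PTensor ℝ K L) (x : MIdx L → ℝ) :
    mulE (einstein A B) x = mulE A (mulE B x) := by
  funext j
  simp only [mulE, einstein, Finset.sum_mul, Finset.mul_sum]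
  rw [Finset.sum_comm]
  exact Finset.sum_congr rfl fun k _ => Finset.sum_congr rfl fun i _ => by ring

lemma mulE_uid (x : MIdx J → ℝ) : mulE (uid ℝ J) x = x := by
  funext j
  simp [mulE, uid, ite_mul]

lemma mulE_add (A : PTensor ℝ J K) (x y : MIdx K → ℝ) :
    mulE A (x + y) = mulE A x + mulE A y := by
  funext j
  simp [mulE, mul_add, Finset.sum_add_distrib]

lemma mulE_vsum (A : PTensor ℝ J K) {ι : Type*} (S : Finset ι) (f : ι → MIdx K → ℝ) :
    mulE A (∑ s ∈ S, f s) = ∑ s ∈ S, mulE A (f s) := by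
  funext j
  simp only [mulE, Finset.sum_apply, Finset.mul_sum]
  rw [Finset.sum_comm]

lemma sum_mulE {ι : Type*} (S : Finset ι) (M : ι → PTensor ℝ J K) (x : MIdx K → ℝ) :
    mulE (∑ s ∈ S, M s) x = ∑ s ∈ S, mulE (M s) x := by
  funext j
  simp only [mulE, Finset.sum_apply, Finset.sum_mul]
  rw [Finset.sum_comm]

end AuxLemmas

/-- if the reachability Gramian is U-positive definite (with
U-inverse `Winv`), then for any `X₀`, `X₁` the specific control
`U_t = Bᵀ * (Aᵀ)^{t₁−t−1} * W_r⁻¹ * (X₁ − A^{t₁−t₀} * X₀)` steers the system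
`X_{t+1} = A*X_t + B*U_t` from `X_{t₀} = X₀` to `X_{t₁} = X₁`. -/
theorem reachGramian_posDef_reachable {N : ℕ} {J K : Fin N → ℕ}
    (A : PTensor ℝ J J) (B : PTensor ℝ J K) (t₀ t₁ : ℕ) (ht : t₀ < t₁)
    (hpos : UPosDef (reachGramian A B t₀ t₁))
    (Winv : PTensor ℝ J J)
    (hinv₁ : einstein (reachGramian A B t₀ t₁) Winv = uid ℝ J)
    (hinv₂ : einstein Winv (reachGramian A B t₀ t₁) = uid ℝ J)
    (X₀ X₁ : MIdx J → ℝ) :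
    ∃ X : ℕ → MIdx J → ℝ,
      X t₀ = X₀ ∧
      (∀ t, t₀ ≤ t →
        X (t + 1) = mulE A (X t) +
          mulE B (mulE (transp B) (mulE (epow (transp A) (t₁ - t - 1))
            (mulE Winv (X₁ - mulE (epow A (t₁ - t₀)) X₀))))) ∧
      X t₁ = X₁ := by
  classical
  set v : MIdx J → ℝ := X₁ - mulE (epow A (t₁ - t₀)) X₀ with hv
  set U : ℕ → MIdx K → ℝ := fun t =>
    mulE (transp B) (mulE (epow (transp A) (t₁ - t - 1)) (mulE Winv v)) with hU
  set g : ℕ → MIdx J → ℝ := fun n =>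
    Nat.rec X₀ (fun n gn => mulE A gn + mulE B (U (t₀ + n))) n with hg
  have hg0 : g 0 = X₀ := rfl
  have hgS : ∀ n, g (n + 1) = mulE A (g n) + mulE B (U (t₀ + n)) := fun n => rfl
  have hclosed : ∀ n, g n = mulE (epow A n) X₀ +
      ∑ s ∈ Finset.range n, mulE (epow A (n - 1 - s)) (mulE B (U (t₀ + s))) := by
    intro n
    induction n with
    | zero => simp [hg0, epow, mulE_uid]
    | succ n ih =>
      rw [hgS, ih, mulE_add, mulE_vsum]
      have h1 : mulE A (mulE (epow A n) X₀) = mulE (epow A (n + 1)) X₀ := by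
        rw [show epow A (n + 1) = einstein A (epow A n) from rfl, mulE_einstein]
      rw [h1, Finset.sum_range_succ]
      have h3 : n + 1 - 1 - n = 0 := by omega
      rw [h3, show (epow A 0 : PTensor ℝ J J) = uid ℝ J from rfl, mulE_uid]
      have h2 : ∀ s ∈ Finset.range n,
          mulE A (mulE (epow A (n - 1 - s)) (mulE B (U (t₀ + s))))
            = mulE (epow A (n + 1 - 1 - s)) (mulE B (U (t₀ + s))) := by
        intro s hs
        simp only [Finset.mem_range] at hs
        have he : n + 1 - 1 - s = (n - 1 - s) + 1 := by omega
        rw [he, show epow A ((n - 1 - s) + 1) = einstein A (epow A (n - 1 - s)) from rfl,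
          mulE_einstein]
      rw [Finset.sum_congr rfl h2]
      abel
  refine ⟨fun t => g (t - t₀), by simp [hg0], ?_, ?_⟩
  · intro t hts
    have h1 : t + 1 - t₀ = (t - t₀) + 1 := by omega
    have h2 : t₀ + (t - t₀) = t := by omega
    simp only [h1, hgS, h2, hU, hv]
  · set m := t₁ - t₀ with hm
    have hm1 : 1 ≤ m := by omega
    have key : ∀ s ∈ Finset.range m,
        mulE (epow A (m - 1 - s)) (mulE B (U (t₀ + s)))
          = mulE (einstein (epow A (t₁ - (t₀ + s) - 1))
              (einstein B (einstein (transp B) (epow (transp A) (t₁ - (t₀ + s) - 1)))))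
              (mulE Winv v) := by
      intro s hs
      simp only [Finset.mem_range] at hs
      have he : m - 1 - s = t₁ - (t₀ + s) - 1 := by omega
      rw [he, hU]
      simp only [mulE_einstein]
    have hsum : ∑ s ∈ Finset.range m, mulE (epow A (m - 1 - s)) (mulE B (U (t₀ + s)))
        = mulE (reachGramian A B t₀ t₁) (mulE Winv v) := by
      rw [Finset.sum_congr rfl key, reachGramian, sum_mulE]
      refine Finset.sum_nbij' (fun s => t₀ + s) (fun t => t - t₀) ?_ ?_ ?_ ?_ ?_
      · intro s hs; simp only [Finset.mem_range] at hs
        simp only [Finset.mem_Icc]; omega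
      · intro t htm; simp only [Finset.mem_Icc] at htm
        simp only [Finset.mem_range]; omega
      · intro s hs; simp only [Finset.mem_range] at hs; show t₀ + s - t₀ = s; omega
      · intro t htm; simp only [Finset.mem_Icc] at htm; show t₀ + (t - t₀) = t; omega
      · intro s _; rfl
    have hW : mulE (reachGramian A B t₀ t₁) (mulE Winv v) = v := by
      rw [← mulE_einstein, hinv₁, mulE_uid]
    show g m = X₁
    rw [hclosed m, hsum, hW, hv]
    abel
end

section
/- If the reachability Gramian W_r(t₀,t₁) = Σ_{t=t₀}^{t₁−1} A^{t₁−t−1} * B * Bᵀ * (Aᵀ)^{t₁−t−1} is not U-positive definite, then there exists a target state X₁ that cannot be reached from some initial state X₀ by any input sequence; hence the pair (A,B) fails to be reachable on [t₀,t₁]. -/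
open scoped BigOperators

section Aux

variable {N : ℕ} {R : Type} [CommRing R]

lemma einstein_assoc {J K L I : Fin N → ℕ} (A : PTensor R J K) (B : PTensor R K L)
    (C : PTensor R L I) : einstein (einstein A B) C = einstein A (einstein B C) := by
  funext j i
  simp only [einstein, Finset.sum_mul, Finset.mul_sum]
  rw [Finset.sum_comm]
  simp [mul_assoc]

lemma einstein_uid {J K : Fin N → ℕ} (A : PTensor R J K) : einstein A (uid R K) = A := by
  funext j i
  simp [einstein, uid]

lemma uid_einstein {J K : Fin N → ℕ} (A : PTensor R J K) : einstein (uid R J) A = A := by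
  funext j i
  simp [einstein, uid]

lemma epow_succ' {J : Fin N → ℕ} (A : PTensor R J J) (k : ℕ) :
    epow A (k + 1) = einstein (epow A k) A := by
  induction k with
  | zero => simp [epow, einstein_uid, uid_einstein]
  | succ k ih =>
      show einstein A (epow A (k+1)) = _
      conv_lhs => rw [ih]
      rw [← einstein_assoc]
      rfl

lemma transp_einstein {J K I : Fin N → ℕ} (A : PTensor R J K) (B : PTensor R K I) :
    transp (einstein A B) = einstein (transp B) (transp A) := by
  funext i j
  simp [transp, einstein, mul_comm]

lemma transp_epow {J : Fin N → ℕ} (A : PTensor R J J) (k : ℕ) :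
    transp (epow A k) = epow (transp A) k := by
  induction k with
  | zero =>
      funext i j
      simp only [epow, transp, uid]
      exact if_congr eq_comm rfl rfl
  | succ k ih =>
      show transp (einstein A (epow A k)) = _
      rw [transp_einstein, ih, ← epow_succ']

/-- `xᵀ P (M w) = (xᵀ (P M)) w`. -/
lemma weight_step {J K' : Fin N → ℕ} (P : PTensor ℝ J J) (M : PTensor ℝ J K')
    (x : MIdx J → ℝ) (w : MIdx K' → ℝ) :
    (∑ j', (∑ j, x j * P j j') * mulE M w j') =
      ∑ i, (∑ j, x j * einstein P M j i) * w i := by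
  simp only [mulE, einstein, Finset.sum_mul, Finset.mul_sum]
  rw [Finset.sum_comm]
  refine Finset.sum_congr rfl fun j _ => ?_
  rw [Finset.sum_comm]
  refine Finset.sum_congr rfl fun i _ => Finset.sum_congr rfl fun j' _ => by ring

lemma bilin_self_sq {J K' : Fin N → ℕ} (C : PTensor ℝ J K') (x : MIdx J → ℝ) :
    bilin (einstein C (transp C)) x x = ∑ k, (∑ j, x j * C j k) ^ 2 := by
  calc bilin (einstein C (transp C)) x x
      = ∑ j : MIdx J, ∑ i : MIdx J, ∑ k : MIdx K', x j * C j k * (x i * C i k) := by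
        simp only [bilin, einstein, transp, Finset.mul_sum, Finset.sum_mul]
        exact Finset.sum_congr rfl fun j _ => Finset.sum_congr rfl fun i _ =>
          Finset.sum_congr rfl fun k _ => by ring
    _ = ∑ j : MIdx J, ∑ k : MIdx K', ∑ i : MIdx J, x j * C j k * (x i * C i k) :=
        Finset.sum_congr rfl fun j _ => Finset.sum_comm
    _ = ∑ k : MIdx K', ∑ j : MIdx J, ∑ i : MIdx J, x j * C j k * (x i * C i k) :=
        Finset.sum_comm
    _ = ∑ k, (∑ j, x j * C j k) ^ 2 := by
        refine Finset.sum_congr rfl fun k _ => ?_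
        rw [sq, Finset.sum_mul_sum]

end Aux

/-- if the reachability Gramian is not U-positive definite, then
there is a target state `X₁` that cannot be reached from some initial state
`X₀` at time `t₀` by any input sequence, i.e. `(A,B)` is not reachable on
`[t₀,t₁]`. -/
theorem reachGramian_not_posDef_not_reachable {N : ℕ} {J K : Fin N → ℕ}
    (A : PTensor ℝ J J) (B : PTensor ℝ J K) (t₀ t₁ : ℕ) (ht : t₀ < t₁)
    (hnot : ¬ UPosDef (reachGramian A B t₀ t₁)) :
    ∃ X₀ X₁ : MIdx J → ℝ, ∀ (U : ℕ → MIdx K → ℝ) (X : ℕ → MIdx J → ℝ),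
      X t₀ = X₀ →
      (∀ t, t₀ ≤ t → X (t + 1) = mulE A (X t) + mulE B (U t)) →
      X t₁ ≠ X₁ := by
  rw [UPosDef] at hnot
  push_neg at hnot
  obtain ⟨x, hx, hble⟩ := hnot
  -- rewrite the bilinear form as a sum of squares
  have hform : bilin (reachGramian A B t₀ t₁) x x =
      ∑ t ∈ Finset.Icc t₀ (t₁ - 1), ∑ k,
        (∑ j, x j * einstein (epow A (t₁ - t - 1)) B j k) ^ 2 := by
    have h1 : bilin (reachGramian A B t₀ t₁) x x =
        ∑ t ∈ Finset.Icc t₀ (t₁ - 1),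
          bilin (einstein (epow A (t₁ - t - 1))
            (einstein B (einstein (transp B) (epow (transp A) (t₁ - t - 1))))) x x := by
      calc bilin (reachGramian A B t₀ t₁) x x
          = ∑ j : MIdx J, ∑ i : MIdx J, ∑ t ∈ Finset.Icc t₀ (t₁ - 1),
              x j * (einstein (epow A (t₁ - t - 1))
                (einstein B (einstein (transp B) (epow (transp A) (t₁ - t - 1))))) j i
                * x i := by
            simp only [bilin, reachGramian, Finset.sum_apply, Finset.mul_sum,
              Finset.sum_mul]
        _ = ∑ j : MIdx J, ∑ t ∈ Finset.Icc t₀ (t₁ - 1), ∑ i : MIdx J,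
              x j * (einstein (epow A (t₁ - t - 1))
                (einstein B (einstein (transp B) (epow (transp A) (t₁ - t - 1))))) j i
                * x i := Finset.sum_congr rfl fun j _ => Finset.sum_comm
        _ = ∑ t ∈ Finset.Icc t₀ (t₁ - 1), ∑ j : MIdx J, ∑ i : MIdx J,
              x j * (einstein (epow A (t₁ - t - 1))
                (einstein B (einstein (transp B) (epow (transp A) (t₁ - t - 1))))) j i
                * x i := Finset.sum_comm
        _ = _ := rfl
    rw [h1]
    refine Finset.sum_congr rfl fun t _ => ?_
    have hC : einstein (epow A (t₁ - t - 1))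
        (einstein B (einstein (transp B) (epow (transp A) (t₁ - t - 1)))) =
        einstein (einstein (epow A (t₁ - t - 1)) B)
          (transp (einstein (epow A (t₁ - t - 1)) B)) := by
      rw [transp_einstein, transp_epow, einstein_assoc]
    rw [hC, bilin_self_sq]
  -- all the squared terms vanish
  have hzero : ∀ t ∈ Finset.Icc t₀ (t₁ - 1), ∀ k : MIdx K,
      (∑ j, x j * einstein (epow A (t₁ - t - 1)) B j k) = 0 := by
    have hnn : ∀ t ∈ Finset.Icc t₀ (t₁ - 1),
        0 ≤ ∑ k : MIdx K, (∑ j, x j * einstein (epow A (t₁ - t - 1)) B j k) ^ 2 :=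
      fun t _ => Finset.sum_nonneg fun k _ => sq_nonneg _
    have h0 : ∑ t ∈ Finset.Icc t₀ (t₁ - 1), ∑ k : MIdx K,
        (∑ j, x j * einstein (epow A (t₁ - t - 1)) B j k) ^ 2 = 0 := by
      have := hform ▸ hble
      exact le_antisymm this (Finset.sum_nonneg hnn)
    intro t ht' k
    have h1 := (Finset.sum_eq_zero_iff_of_nonneg hnn).mp h0 t ht'
    have h2 := (Finset.sum_eq_zero_iff_of_nonneg
      (fun k _ => sq_nonneg _)).mp h1 k (Finset.mem_univ k)
    exact pow_eq_zero_iff (by norm_num) |>.mp h2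
  refine ⟨0, x, ?_⟩
  intro U X hX0 hstep hX1
  -- key invariant along the trajectory
  have key : ∀ s, t₀ ≤ s → s ≤ t₁ →
      (∑ j', (∑ j, x j * epow A (t₁ - s) j j') * X s j') = 0 := by
    intro s hs
    induction s, hs using Nat.le_induction with
    | base =>
        intro _
        simp [hX0]
    | succ s hs ih =>
        intro hs1
        have hslt : s < t₁ := hs1
        have hm : t₁ - s = (t₁ - (s + 1)) + 1 := by omega
        rw [hstep s hs]
        simp only [Pi.add_apply, mul_add, Finset.sum_add_distrib]
        have hA : (∑ j', (∑ j, x j * epow A (t₁ - (s+1)) j j') * mulE A (X s) j') = 0 := by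
          rw [weight_step, ← epow_succ', ← hm]
          exact ih hslt.le
        have hB : (∑ j', (∑ j, x j * epow A (t₁ - (s+1)) j j') * mulE B (U s) j') = 0 := by
          rw [weight_step]
          have hmem : s ∈ Finset.Icc t₀ (t₁ - 1) := Finset.mem_Icc.mpr ⟨hs, by omega⟩
          have hm1 : t₁ - s - 1 = t₁ - (s + 1) := by omega
          refine Finset.sum_eq_zero fun k _ => ?_
          rw [← hm1, hzero s hmem k, zero_mul]
        rw [hA, hB, add_zero]
  have hfin := key t₁ ht.le le_rfl
  rw [hX1] at hfin
  simp only [Nat.sub_self] at hfin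
  have hx0 : ∑ j', x j' * x j' = 0 := by
    rw [← hfin]
    refine Finset.sum_congr rfl fun j' _ => ?_
    congr 1
    show x j' = ∑ j, x j * epow A 0 j j'
    simp [epow, uid]
  exact hx (funext fun j => by
    have := (Finset.sum_eq_zero_iff_of_nonneg
      (fun j _ => mul_self_nonneg (x j))).mp hx0 j (Finset.mem_univ j)
    have := mul_self_eq_zero.mp this
    simp [this])
end

section
/- For matrices A ∈ ℝ^{J×R} and B ∈ ℝ^{I×R} with k-ranks k_A, k_B ≥ 1, if k_A + k_B ≥ R + 1 then the Khatri-Rao product A ⊙ B ∈ ℝ^{JI×R} has full column rank R. -/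
open scoped BigOperators

/-- The k-rank (Kruskal rank) of a matrix: the largest `k ≤ R` such that every
set of `k` columns is linearly independent. -/
noncomputable def kRank {J R : ℕ} (A : Matrix (Fin J) (Fin R) ℝ) : ℕ :=
  sSup {k | k ≤ R ∧ ∀ s : Finset (Fin R), s.card = k →
    LinearIndependent ℝ (fun r : s => A.transpose r.val)}

/-- The Khatri-Rao (column-wise Kronecker) product. -/
def khatriRao {J I R : ℕ} (A : Matrix (Fin J) (Fin R) ℝ)
    (B : Matrix (Fin I) (Fin R) ℝ) : Matrix (Fin J × Fin I) (Fin R) ℝ :=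
  fun p r => A p.1 r * B p.2 r

/-!
Suppose `(A ⊙ B) c = 0`, i.e. `A diag(c) Bᵀ = 0`, with `c r₀ ≠ 0`, and let `S` be the support
of `c`. Choose `U ⊆ S \ {r₀}` with `|U| = |S| - k_B` (zero when `|S| ≤ k_B`). Since
`|S| ≤ R < k_A + k_B`, we get `|U ∪ {r₀}| ≤ k_A`, so some `w` is orthogonal to the columns `a_r`,
`r ∈ U`, but not to `a_{r₀}`. Multiplying by `wᵀ` on the left gives `B d = 0` with
`d_r = ⟪w, a_r⟫ c_r`, which is supported on `S \ U`, a set of at most `k_B` columns of `B`.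
Hence `d = 0`, contradicting `d_{r₀} ≠ 0`.
-/

open Matrix Finset

theorem Matrix.mulVec_vecMul_mul_diagonal {α m n o : Type*} [CommSemiring α] [Fintype m]
    [Fintype n] [DecidableEq n] (w : m → α) (A : Matrix m n α) (c : n → α) (B : Matrix o n α) :
    B *ᵥ (fun r => (w ᵥ* A) r * c r) = w ᵥ* (A * diagonal c * Bᵀ) := by
  rw [← vecMul_vecMul, ← vecMul_vecMul, vecMul_transpose]
  congr 1
  funext r
  rw [vecMul_diagonal]

theorem LinearIndepOn.exists_separating_dotProduct {K ι n : Type*} [Field K] [Fintype n]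
    [DecidableEq n] {v : ι → n → K} {s : Set ι} {i : ι}
    (h : LinearIndepOn K v (insert i s)) (hi : i ∉ s) :
    ∃ w : n → K, w ⬝ᵥ v i ≠ 0 ∧ ∀ j ∈ s, w ⬝ᵥ v j = 0 := by
  have hspan : v i ∉ Submodule.span K (v '' s) :=
    (h.mono (Set.subset_insert i s)).notMem_span_iff.mpr ⟨h, hi⟩
  obtain ⟨f, hfi, hfs⟩ := Submodule.exists_dual_map_eq_bot_of_notMem hspan inferInstance
  have hf : ∀ x, (dotProductEquiv K n).symm f ⬝ᵥ x = f x := fun x => by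
    rw [← dotProductEquiv_apply_apply, LinearEquiv.apply_symm_apply]
  refine ⟨(dotProductEquiv K n).symm f, by rwa [hf], fun j hj => ?_⟩
  rw [hf, ← Submodule.mem_bot K, ← hfs]
  exact Submodule.mem_map_of_mem (Submodule.subset_span (Set.mem_image_of_mem v hj))

section KRank

variable {J R : ℕ} (A : Matrix (Fin J) (Fin R) ℝ)

theorem kRank_mem : kRank A ∈ {k | k ≤ R ∧ ∀ s : Finset (Fin R), s.card = k →
    LinearIndependent ℝ (fun r : s => A.transpose r.val)} :=
  Nat.sSup_mem ⟨0, Nat.zero_le R, fun s hs => by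
    rw [card_eq_zero.mp hs]
    exact linearIndependent_empty_type⟩ ⟨R, fun _ hk => hk.1⟩

theorem kRank_le : kRank A ≤ R :=
  (kRank_mem A).1

theorem linearIndepOn_cols_of_card_le_kRank {s : Finset (Fin R)} (hs : #s ≤ kRank A) :
    LinearIndepOn ℝ Aᵀ (s : Set (Fin R)) := by
  obtain ⟨t, hst, ht⟩ := exists_superset_card_eq hs (by simpa using kRank_le A)
  exact LinearIndepOn.mono ((kRank_mem A).2 t ht) (coe_subset.mpr hst)

theorem eq_zero_of_mulVec_eq_zero_of_support_subset {d : Fin R → ℝ} {s : Finset (Fin R)}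
    (hs : #s ≤ kRank A) (hds : Function.support d ⊆ s) (hd : A *ᵥ d = 0) : d = 0 := by
  have hsum : ∑ r ∈ s, d r • Aᵀ r = 0 := by
    rw [sum_subset (subset_univ s) fun r _ hr => by
      rw [Function.notMem_support.mp fun h => hr (hds h), zero_smul],
      ← vecMul_eq_sum, vecMul_transpose, hd]
  funext r
  by_cases hr : r ∈ s
  · exact linearIndepOn_finset_iff.mp (linearIndepOn_cols_of_card_le_kRank A hs) d hsum r hr
  · exact Function.notMem_support.mp fun h => hr (hds h)

end KRank

section KhatriRao

variable {J I R : ℕ} (A : Matrix (Fin J) (Fin R) ℝ) (B : Matrix (Fin I) (Fin R) ℝ) (c : Fin R → ℝ)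

theorem khatriRao_mulVec_apply (j : Fin J) (i : Fin I) :
    (khatriRao A B *ᵥ c) (j, i) = (A * diagonal c * Bᵀ) j i := by
  rw [mul_apply]
  simp only [mulVec, dotProduct, khatriRao, mul_diagonal, transpose_apply]
  exact sum_congr rfl fun r _ => by ring

theorem khatriRao_mulVec_eq_zero_iff : khatriRao A B *ᵥ c = 0 ↔ A * diagonal c * Bᵀ = 0 := by
  rw [funext_iff, Prod.forall, ← Matrix.ext_iff]
  simp only [khatriRao_mulVec_apply, Pi.zero_apply, Matrix.zero_apply]

end KhatriRao

theorem eq_zero_of_mul_diagonal_mul_transpose_eq_zero {J I R : ℕ}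
    (A : Matrix (Fin J) (Fin R) ℝ) (B : Matrix (Fin I) (Fin R) ℝ)
    (h : R + 1 ≤ kRank A + kRank B) {c : Fin R → ℝ} (hc : A * diagonal c * Bᵀ = 0) :
    c = 0 := by
  by_contra hne
  obtain ⟨r₀, hr₀⟩ := Function.ne_iff.mp hne
  set S := univ.filter (c · ≠ 0)
  have hr₀S : r₀ ∈ S := by simpa [S] using hr₀
  have hSR : #S ≤ R := by simpa using card_le_univ S
  have hS : 1 ≤ #S := card_pos.mpr ⟨r₀, hr₀S⟩
  have hkA := kRank_le A
  have hkB := kRank_le B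
  obtain ⟨U, hUS, hU⟩ := exists_subset_card_eq (s := S.erase r₀) (n := #S - kRank B)
    (by rw [card_erase_of_mem hr₀S]; omega)
  have hr₀U : r₀ ∉ U := fun h => by simpa using hUS h
  have hT : LinearIndepOn ℝ Aᵀ (insert r₀ (U : Set (Fin R))) := by
    rw [← coe_insert]
    exact linearIndepOn_cols_of_card_le_kRank A (by rw [card_insert_of_notMem hr₀U]; omega)
  obtain ⟨w, hw₀, hwU⟩ := hT.exists_separating_dotProduct (mod_cast hr₀U)
  have hd : B *ᵥ (fun r => (w ᵥ* A) r * c r) = 0 := by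
    rw [mulVec_vecMul_mul_diagonal, hc, vecMul_zero]
  have hsupp : Function.support (fun r => (w ᵥ* A) r * c r) ⊆ ↑(S \ U) := by
    intro r hr
    obtain ⟨hwr, hcr⟩ := mul_ne_zero_iff.mp hr
    exact mem_sdiff.mpr ⟨by simpa [S] using hcr, fun hrU => hwr (hwU r hrU)⟩
  have hd₀ := eq_zero_of_mulVec_eq_zero_of_support_subset B
    (by rw [card_sdiff_of_subset (hUS.trans (erase_subset r₀ S))]; omega) hsupp hd
  exact mul_ne_zero hw₀ hr₀ (congrFun hd₀ r₀)

theorem khatriRao_full_rank_general {J I R : ℕ}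
    (A : Matrix (Fin J) (Fin R) ℝ) (B : Matrix (Fin I) (Fin R) ℝ)
    (h : R + 1 ≤ kRank A + kRank B) :
    (khatriRao A B).rank = R := by
  have hinj : Function.Injective (khatriRao A B).mulVecLin := by
    rw [← LinearMap.ker_eq_bot, ker_mulVecLin_eq_bot_iff]
    exact fun c hc => eq_zero_of_mul_diagonal_mul_transpose_eq_zero A B h
      ((khatriRao_mulVec_eq_zero_iff A B c).mp hc)
  rw [rank, LinearMap.finrank_range_of_inj hinj, Module.finrank_fin_fun]

/-- if `k_A + k_B ≥ R + 1` (with `k_A, k_B ≥ 1`), then the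
Khatri-Rao product `A ⊙ B` has full column rank `R`. -/
theorem khatriRao_full_rank {J I R : ℕ}
    (A : Matrix (Fin J) (Fin R) ℝ) (B : Matrix (Fin I) (Fin R) ℝ)
    (hA : 1 ≤ kRank A) (hB : 1 ≤ kRank B)
    (h : R + 1 ≤ kRank A + kRank B) :
    (khatriRao A B).rank = R :=
  khatriRao_full_rank_general A B h
end

section
/- For matrices A^{(n)} ∈ ℝ^{J_n×R}, n = 1,…,N, each with k-rank k_{A^{(n)}} ≥ 1, if Σ_{n=1}^N k_{A^{(n)}} ≥ R + N − 1, then the iterated Khatri-Rao product A^{(1)} ⊙ A^{(2)} ⊙ ⋯ ⊙ A^{(N)} has full column rank R. -/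
open scoped BigOperators

/-- The iterated Khatri-Rao product of `N` matrices: the `r`-th column is
`a^{(1)}_r ⊗ ⋯ ⊗ a^{(N)}_r`. -/
def iterKhatriRao {N R : ℕ} {J : Fin N → ℕ}
    (A : ∀ n, Matrix (Fin (J n)) (Fin R) ℝ) :
    Matrix (∀ n, Fin (J n)) (Fin R) ℝ :=
  fun j r => ∏ n, A n (j n) r

/-!
Call a family of vectors `k`-independent (`LinearIndepUpTo K k`) if every subfamily of at most
`k` of them is linearly independent. The key fact is Kruskal's bound: if `a` is `ka`-independent
and `b` is `kb`-independent, the Khatri-Rao columns `a r ⊗ b r` are `(ka + kb - 1)`-independent.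
Given a dependency `∑ c r • (a r ⊗ b r) = 0` over at most `ka + kb - 1` indices with `c t ≠ 0`,
pick `min ka |s|` of the indices, including `t`, and a functional `φ` that kills the `a r` among
them except `a t`. Contracting the first tensor factor with `φ` leaves a dependency among at most
`kb` of the `b r` whose coefficient at `t` is `c t * φ (a t) ≠ 0`. Iterating, the `N`-fold
product is `(∑ k_n + 1 - N)`-independent, so all `R` of its columns are independent.
-/

open Finset

section LinearIndepUpTo

variable {K ι M : Type*} [Field K] [AddCommGroup M] [Module K M]

variable (K) in
def LinearIndepUpTo (k : ℕ) (v : ι → M) : Prop :=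
  ∀ s : Finset ι, #s ≤ k → LinearIndepOn K v s

variable {k : ℕ} {v : ι → M}

theorem LinearIndepUpTo.mono {j : ℕ} (h : LinearIndepUpTo K k v) (hjk : j ≤ k) :
    LinearIndepUpTo K j v :=
  fun s hs => h s (hs.trans hjk)

theorem LinearIndepUpTo.map' {M' : Type*} [AddCommGroup M'] [Module K M']
    (h : LinearIndepUpTo K k v) (f : M →ₗ[K] M') (hf : Function.Injective f) :
    LinearIndepUpTo K k (f ∘ v) :=
  fun s hs => (h s hs).map' f (LinearMap.ker_eq_bot.mpr hf)

theorem LinearIndepUpTo.linearIndependent [Fintype ι] (h : LinearIndepUpTo K k v)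
    (hk : Fintype.card ι ≤ k) : LinearIndependent K v := by
  simpa using h univ (by simpa using hk)

theorem linearIndepUpTo_one (hv : ∀ i, v i ≠ 0) : LinearIndepUpTo K 1 v := by
  intro s hs
  rcases Nat.le_one_iff_eq_zero_or_eq_one.mp hs with hs | hs
  · simp [card_eq_zero.mp hs]
  · obtain ⟨i, rfl⟩ := card_eq_one.mp hs
    simpa using hv i

theorem LinearIndepOn.exists_dual_ne_zero_and_eq_zero {s : Set ι} {i : ι}
    (hv : LinearIndepOn K v s) (hi : i ∈ s) :
    ∃ φ : Module.Dual K M, φ (v i) ≠ 0 ∧ ∀ j ∈ s, j ≠ i → φ (v j) = 0 := by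
  obtain ⟨φ, hφi, hφs⟩ :=
    Submodule.exists_dual_map_eq_bot_of_notMem (hv.notMem_span hi) inferInstance
  refine ⟨φ, hφi, fun j hj hji => ?_⟩
  rw [← Submodule.mem_bot K, ← hφs]
  exact Submodule.mem_map_of_mem (Submodule.subset_span ⟨j, ⟨hj, hji⟩, rfl⟩)

end LinearIndepUpTo

section KhatriRao

variable {K ι α β : Type*} [Field K] {a : ι → α → K} {b : ι → β → K}

def khatriRaoCols (a : ι → α → K) (b : ι → β → K) : ι → α × β → K :=
  fun r p => a r p.1 * b r p.2

theorem sum_smul_eq_zero_of_sum_smul_khatriRaoCols_eq_zero {s : Finset ι} {c : ι → K}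
    (hc : ∑ r ∈ s, c r • khatriRaoCols a b r = 0) (φ : Module.Dual K (α → K)) :
    ∑ r ∈ s, (c r * φ (a r)) • b r = 0 := by
  ext q
  have hq : ∑ r ∈ s, (c r * b r q) • a r = 0 := by
    ext x
    have hx := congrFun hc (x, q)
    simp only [khatriRaoCols, Finset.sum_apply, Pi.smul_apply, smul_eq_mul, Pi.zero_apply] at hx ⊢
    rw [← hx]
    exact sum_congr rfl fun r _ => by ring
  simpa [Finset.sum_apply, mul_comm, mul_left_comm, mul_assoc] using congrArg φ hq

theorem LinearIndepUpTo.khatriRaoCols {ka kb : ℕ} (ha : LinearIndepUpTo K ka a)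
    (hb : LinearIndepUpTo K kb b) (hka : 1 ≤ ka) (hkb : 1 ≤ kb) :
    LinearIndepUpTo K (ka + kb - 1) (khatriRaoCols a b) := by
  classical
  intro s hs
  rw [linearIndepOn_finset_iff]
  intro c hc t hts
  by_contra hct
  have hs_pos : 0 < #s := card_pos.mpr ⟨t, hts⟩
  obtain ⟨T, htT, hTs, hT⟩ := exists_subsuperset_card_eq (singleton_subset_iff.mpr hts)
    (n := min ka #s) (by rw [card_singleton]; omega) (min_le_right _ _)
  rw [singleton_subset_iff] at htT
  obtain ⟨φ, hφt, hφT⟩ :=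
    (ha T (hT ▸ min_le_left _ _)).exists_dual_ne_zero_and_eq_zero (mem_coe.mpr htT)
  have hU : #(s \ T.erase t) ≤ kb := by
    have := card_sdiff_of_subset ((erase_subset t T).trans hTs)
    have := card_erase_of_mem htT
    omega
  have hdep : ∑ r ∈ s \ T.erase t, (c r * φ (a r)) • b r = 0 := by
    rw [← sum_smul_eq_zero_of_sum_smul_khatriRaoCols_eq_zero hc φ]
    refine sum_subset sdiff_subset fun r hrs hrU => ?_
    obtain ⟨hrt, hrT⟩ := mem_erase.mp (by simpa [hrs] using hrU)
    simp [hφT r hrT hrt]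
  exact mul_ne_zero hct hφt <|
    linearIndepOn_finset_iff.mp (hb _ hU) _ hdep t (by simp [hts])

end KhatriRao

theorem linearIndepUpTo_kRank {J R : ℕ} (A : Matrix (Fin J) (Fin R) ℝ) :
    LinearIndepUpTo ℝ (kRank A) A.col := by
  have hmem : kRank A ∈ {k | k ≤ R ∧ ∀ s : Finset (Fin R), #s = k →
      LinearIndependent ℝ (fun r : s => A.transpose r.val)} :=
    Nat.sSup_mem ⟨0, Nat.zero_le R, fun s hs => by
        obtain rfl := card_eq_zero.mp hs
        exact linearIndependent_empty_type⟩
      ⟨R, fun k hk => hk.1⟩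
  intro s hs
  obtain ⟨u, hsu, -, hu⟩ := exists_subsuperset_card_eq (subset_univ s) hs (by simpa using hmem.1)
  exact LinearIndepOn.mono (hmem.2 u hu) (coe_subset.mpr hsu)

theorem linearIndepUpTo_iterKhatriRao {R : ℕ} :
    ∀ {N : ℕ} {J : Fin N → ℕ} (A : ∀ n, Matrix (Fin (J n)) (Fin R) ℝ),
      (∀ n, 1 ≤ kRank (A n)) →
        LinearIndepUpTo ℝ (∑ n, kRank (A n) + 1 - N) (iterKhatriRao A).col
  | 0, _, A, _ => by
    simpa using linearIndepUpTo_one fun r =>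
      Function.ne_iff.mpr ⟨isEmptyElim, by simp [iterKhatriRao, Matrix.col]⟩
  | N + 1, J, A, hk => by
    have htail := linearIndepUpTo_iterKhatriRao (fun n => A n.succ) (fun n => hk n.succ)
    have hN : N ≤ ∑ n : Fin N, kRank (A n.succ) := by
      simpa using sum_le_sum (s := (univ : Finset (Fin N))) fun n _ => hk n.succ
    have hprod := (linearIndepUpTo_kRank (A 0)).khatriRaoCols htail (hk 0) (by omega)
    have hcols : (iterKhatriRao A).col =
        LinearMap.funLeft ℝ ℝ (Fin.consEquiv fun n => Fin (J n)).symm ∘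
          khatriRaoCols (A 0).col (iterKhatriRao fun n => A n.succ).col := by
      ext r j
      simp [iterKhatriRao, khatriRaoCols, Fin.prod_univ_succ, Matrix.col, Fin.consEquiv, Fin.tail]
    rw [hcols, Fin.sum_univ_succ]
    exact (hprod.map' _ (LinearMap.funLeft_injective_of_surjective _ _ _
      (Equiv.surjective _))).mono (by omega)

/-- if `Σ_n k_{A^{(n)}} ≥ R + N − 1` with all `k_{A^{(n)}} ≥ 1`,
then the iterated Khatri-Rao product `A^{(1)} ⊙ ⋯ ⊙ A^{(N)}` has full column
rank `R`. -/
theorem iterKhatriRao_full_rank {N R : ℕ} {J : Fin N → ℕ}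
    (A : ∀ n, Matrix (Fin (J n)) (Fin R) ℝ)
    (hk : ∀ n, 1 ≤ kRank (A n))
    (h : R + N ≤ (∑ n, kRank (A n)) + 1) :
    (iterKhatriRao A).rank = R := by
  have hindep : LinearIndependent ℝ (iterKhatriRao A).col :=
    (linearIndepUpTo_iterKhatriRao A hk).linearIndependent (by rw [Fintype.card_fin]; omega)
  rw [Matrix.rank_eq_finrank_span_cols, finrank_span_eq_card hindep, Fintype.card_fin]
end

section
/- Let A_n ∈ ℝ^{J_n×J_n} with spectral radii ρ^{(n)}, and consider the dynamics X_{t+1} = X_t ×{A₁, A₂, …, A_N}. If ∏_{n=1}^{N} ρ^{(n)} < 1, the equilibrium X = 0 is asymptotically stable; if ∏_{n=1}^{N} ρ^{(n)} > 1, it is unstable. -/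
open scoped BigOperators

/-- The Tucker product `X ×{M₁,…,M_N}` applying `M_n` along mode `n`. -/
def tucker {N : ℕ} {J : Fin N → ℕ}
    (X : MIdx J → ℝ) (M : ∀ n, Matrix (Fin (J n)) (Fin (J n)) ℝ) :
    MIdx J → ℝ :=
  fun k => ∑ j, (∏ n, M n (k n) (j n)) * X j

/-- The spectral radius of a real matrix: the supremum of the moduli of its
complex eigenvalues. -/
noncomputable def specRad {m : ℕ} (M : Matrix (Fin m) (Fin m) ℝ) : ℝ :=
  sSup {r : ℝ | ∃ (μ : ℂ) (v : Fin m → ℂ), v ≠ 0 ∧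
    (M.map (fun x => (x : ℂ))).mulVec v = μ • v ∧ r = ‖μ‖}

/-!
Under vectorization the Tucker map `X ↦ X ×{A₁,…,A_N}` is the Kronecker product `A_N ⊗ ⋯ ⊗ A₁`.
If `∏ ρ⁽ⁿ⁾ < 1`, pick `rₙ > ρ⁽ⁿ⁾` with `∏ rₙ < 1`; Gelfand's formula bounds the entries of `Aₙᵗ` by
`rₙᵗ` for large `t`, so every entry of `Xₜ = X₀ ×{A₁ᵗ,…,A_Nᵗ}` decays like `(∏ rₙ)ᵗ`.
If `∏ ρ⁽ⁿ⁾ > 1`, take complex eigenvectors `vₙ` of `Aₙ` for eigenvalues `μₙ` of modulus `ρ⁽ⁿ⁾`;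
then `w = v₁ ⊗ ⋯ ⊗ v_N` is an eigenvector of the Tucker map for `μ = ∏ μₙ`, and the real and
imaginary parts of `μᵗ w` are real solutions whose squared norms add up to `|μ|²ᵗ ‖w‖²`,
so one of them is unbounded.
-/

open Filter Topology Matrix

section SpectralRadius

lemma Matrix.mem_spectrum_iff_exists_mulVec_eq_smul {K n : Type*} [Field K] [Fintype n]
    [DecidableEq n] (A : Matrix n n K) (μ : K) :
    μ ∈ spectrum K A ↔ ∃ v ≠ 0, A *ᵥ v = μ • v := by
  rw [← Matrix.spectrum_toLin', ← Module.End.hasEigenvalue_iff_mem_spectrum,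
    Module.End.hasEigenvalue_iff, Submodule.ne_bot_iff]
  simp only [Module.End.mem_eigenspace_iff, Matrix.toLin'_apply]
  exact ⟨fun ⟨v, hv, h0⟩ => ⟨v, h0, hv⟩, fun ⟨v, h0, hv⟩ => ⟨v, hv, h0⟩⟩

variable {m : ℕ} (M : Matrix (Fin m) (Fin m) ℝ)

lemma specRad_eq_sSup_norm_spectrum :
    specRad M = sSup (norm '' spectrum ℂ (M.map Complex.ofReal)) := by
  simp only [specRad]
  congr 1
  ext r
  simp only [Set.mem_ofPred_eq, Set.mem_image, Matrix.mem_spectrum_iff_exists_mulVec_eq_smul]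
  grind

lemma finite_norm_spectrum : (norm '' spectrum ℂ (M.map Complex.ofReal)).Finite :=
  (Matrix.finite_spectrum _).image _

lemma specRad_nonneg : 0 ≤ specRad M := by
  rw [specRad_eq_sSup_norm_spectrum]
  exact Real.sSup_nonneg (by rintro _ ⟨μ, -, rfl⟩; exact norm_nonneg μ)

lemma norm_le_specRad {μ : ℂ} (hμ : μ ∈ spectrum ℂ (M.map Complex.ofReal)) : ‖μ‖ ≤ specRad M := by
  rw [specRad_eq_sSup_norm_spectrum]
  exact le_csSup (finite_norm_spectrum M).bddAbove ⟨μ, hμ, rfl⟩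

lemma exists_mem_spectrum_norm_eq_specRad (h : specRad M ≠ 0) :
    ∃ μ ∈ spectrum ℂ (M.map Complex.ofReal), ‖μ‖ = specRad M := by
  rw [specRad_eq_sSup_norm_spectrum] at h ⊢
  have hne : (norm '' spectrum ℂ (M.map Complex.ofReal)).Nonempty :=
    Set.nonempty_iff_ne_empty.2 fun he => h (by rw [he, Real.sSup_empty])
  exact hne.csSup_mem (finite_norm_spectrum M)

lemma spectralRadius_map_ofReal_le :
    spectralRadius ℂ (M.map Complex.ofReal) ≤ ENNReal.ofReal (specRad M) :=
  iSup₂_le fun μ hμ => by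
    rw [← ENNReal.ofReal_coe_nnreal, coe_nnnorm]
    exact ENNReal.ofReal_le_ofReal (norm_le_specRad M hμ)

end SpectralRadius

lemma spectrum.eventually_norm_pow_lt {A : Type*} [NormedRing A] [NormedAlgebra ℂ A]
    [CompleteSpace A] (a : A) {r : ℝ} (hr : spectralRadius ℂ a < ENNReal.ofReal r) :
    ∀ᶠ t : ℕ in atTop, ‖a ^ t‖ < r ^ t := by
  have hgelfand := spectrum.pow_norm_pow_one_div_tendsto_nhds_spectralRadius a
  filter_upwards [hgelfand.eventually_lt_const hr, eventually_ne_atTop 0] with t ht ht0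
  have hroot : ‖a ^ t‖ ^ (1 / t : ℝ) < r := (ENNReal.ofReal_lt_ofReal_iff'.1 ht).1
  calc ‖a ^ t‖ = (‖a ^ t‖ ^ (1 / t : ℝ)) ^ t := by
        rw [one_div, Real.rpow_inv_natCast_pow (norm_nonneg _) ht0]
    _ < r ^ t := pow_lt_pow_left₀ hroot (by positivity) ht0

section Gelfand

attribute [local instance] Matrix.linftyOpSeminormedAddCommGroup Matrix.linftyOpNormedRing
  Matrix.linftyOpNormedAlgebra

lemma Matrix.norm_entry_le_linfty_opNorm {m n α : Type*} [Fintype m] [Fintype n]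
    [SeminormedAddCommGroup α] (A : Matrix m n α) (i : m) (j : n) : ‖A i j‖ ≤ ‖A‖ := by
  rw [← coe_nnnorm, ← coe_nnnorm, NNReal.coe_le_coe, Matrix.linfty_opNNNorm_def]
  exact (Finset.single_le_sum (fun _ _ => zero_le) (Finset.mem_univ j)).trans
    (Finset.le_sup (f := fun i => ∑ j, ‖A i j‖₊) (Finset.mem_univ i))

lemma eventually_abs_pow_apply_le {m : ℕ} (M : Matrix (Fin m) (Fin m) ℝ) {r : ℝ}
    (hr : specRad M < r) : ∀ᶠ t : ℕ in atTop, ∀ i j, |(M ^ t) i j| ≤ r ^ t := by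
  have hρ : spectralRadius ℂ (M.map Complex.ofReal) < ENNReal.ofReal r :=
    (spectralRadius_map_ofReal_le M).trans_lt
      ((ENNReal.ofReal_lt_ofReal_iff ((specRad_nonneg M).trans_lt hr)).2 hr)
  filter_upwards [spectrum.eventually_norm_pow_lt _ hρ] with t ht i j
  have hpow : M.map Complex.ofReal ^ t = (M ^ t).map Complex.ofReal :=
    (Matrix.map_pow M Complex.ofRealHom t).symm
  calc |(M ^ t) i j| = ‖(M.map Complex.ofReal ^ t) i j‖ := by simp [hpow]
    _ ≤ ‖M.map Complex.ofReal ^ t‖ := Matrix.norm_entry_le_linfty_opNorm _ i j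
    _ ≤ r ^ t := ht.le

end Gelfand

lemma Real.exists_pos_prod_add_lt {ι : Type*} [Fintype ι] {f : ι → ℝ} {c : ℝ}
    (h : ∏ i, f i < c) : ∃ ε > 0, ∏ i, (f i + ε) < c := by
  have hcont : Continuous fun ε : ℝ => ∏ i, (f i + ε) := by fun_prop
  have hlim : Tendsto (fun ε : ℝ => ∏ i, (f i + ε)) (𝓝[>] 0) (𝓝 (∏ i, (f i + 0))) :=
    (hcont.tendsto 0).mono_left nhdsWithin_le_nhds
  simp only [add_zero] at hlim
  obtain ⟨ε, hε, hlt⟩ := ((eventually_mem_nhdsWithin).and (hlim.eventually_lt_const h)).exists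
  exact ⟨ε, hε, hlt⟩

lemma not_bddAbove_or_of_not_bddAbove_sq_add_sq {α : Type*} {f g : α → ℝ} (hf : ∀ a, 0 ≤ f a)
    (hg : ∀ a, 0 ≤ g a) (h : ¬BddAbove (Set.range fun a => f a ^ 2 + g a ^ 2)) :
    ¬BddAbove (Set.range f) ∨ ¬BddAbove (Set.range g) := by
  contrapose! h
  obtain ⟨⟨b, hb⟩, ⟨c, hc⟩⟩ := h
  refine ⟨b ^ 2 + c ^ 2, ?_⟩
  rintro _ ⟨a, rfl⟩
  exact add_le_add (pow_le_pow_left₀ (hf a) (hb ⟨a, rfl⟩) 2)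
    (pow_le_pow_left₀ (hg a) (hc ⟨a, rfl⟩) 2)

section Tucker

variable {N : ℕ} {J : Fin N → ℕ}

lemma tucker_one (X : MIdx J → ℝ) : tucker X (fun _ => 1) = X := by
  funext k
  simp [tucker, Matrix.one_apply, Fintype.prod_boole, ← funext_iff]

lemma tucker_tucker (X : MIdx J → ℝ) (M M' : ∀ n, Matrix (Fin (J n)) (Fin (J n)) ℝ) :
    tucker (tucker X M') M = tucker X (fun n => M n * M' n) := by
  funext k
  simp only [tucker, Matrix.mul_apply]
  calc ∑ j : MIdx J, (∏ n, M n (k n) (j n)) * ∑ i : MIdx J, (∏ n, M' n (j n) (i n)) * X i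
      = ∑ i : MIdx J, (∑ j : MIdx J, ∏ n, M n (k n) (j n) * M' n (j n) (i n)) * X i := by
        simp_rw [Finset.mul_sum, ← mul_assoc, ← Finset.prod_mul_distrib]
        rw [Finset.sum_comm]
        simp_rw [Finset.sum_mul]
    _ = _ := Finset.sum_congr rfl fun i _ => by
        rw [Fintype.prod_sum (fun n x => M n (k n) x * M' n x (i n))]

lemma tucker_iterate (A : ∀ n, Matrix (Fin (J n)) (Fin (J n)) ℝ) {X : ℕ → MIdx J → ℝ}
    (hX : ∀ t, X (t + 1) = tucker (X t) A) (t : ℕ) : X t = tucker (X 0) (fun n => A n ^ t) := by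
  induction t with
  | zero => simp only [pow_zero, tucker_one]
  | succ t ih => simp only [hX t, ih, tucker_tucker, pow_succ']

lemma abs_tucker_le (X : MIdx J → ℝ) (M : ∀ n, Matrix (Fin (J n)) (Fin (J n)) ℝ)
    {b : Fin N → ℝ} (hM : ∀ n i j, |M n i j| ≤ b n) (k : MIdx J) :
    |tucker X M k| ≤ (∏ n, b n) * ∑ j, |X j| := by
  rw [Finset.mul_sum]
  refine (Finset.abs_sum_le_sum_abs _ _).trans (Finset.sum_le_sum fun j _ => ?_)
  rw [abs_mul, Finset.abs_prod]
  exact mul_le_mul_of_nonneg_right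
    (Finset.prod_le_prod (fun _ _ => abs_nonneg _) fun n _ => hM n _ _) (abs_nonneg _)

lemma continuous_fro : Continuous (fro : (MIdx J → ℝ) → ℝ) := by
  unfold fro
  fun_prop

lemma fro_zero : fro (0 : MIdx J → ℝ) = 0 := by
  simp [fro]

lemma fro_nonneg (x : MIdx J → ℝ) : 0 ≤ fro x :=
  Real.sqrt_nonneg _

lemma fro_sq (x : MIdx J → ℝ) : fro x ^ 2 = ∑ j, x j ^ 2 :=
  Real.sq_sqrt (Finset.sum_nonneg fun _ _ => sq_nonneg _)

lemma fro_re_sq_add_fro_im_sq (z : MIdx J → ℂ) :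
    fro (fun j => (z j).re) ^ 2 + fro (fun j => (z j).im) ^ 2 = ∑ j, ‖z j‖ ^ 2 := by
  rw [fro_sq, fro_sq, ← Finset.sum_add_distrib]
  refine Finset.sum_congr rfl fun j _ => ?_
  rw [Complex.sq_norm, Complex.normSq_apply]
  ring

end Tucker

section TuckerComplex

variable {N : ℕ} {J : Fin N → ℕ}

def tuckerComplex (Z : MIdx J → ℂ) (M : ∀ n, Matrix (Fin (J n)) (Fin (J n)) ℝ) : MIdx J → ℂ :=
  fun k => ∑ j, ((∏ n, M n (k n) (j n) : ℝ) : ℂ) * Z j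

lemma tuckerComplex_smul (c : ℂ) (Z : MIdx J → ℂ) (M : ∀ n, Matrix (Fin (J n)) (Fin (J n)) ℝ) :
    tuckerComplex (c • Z) M = c • tuckerComplex Z M := by
  funext k
  simp only [tuckerComplex, Pi.smul_apply, smul_eq_mul, Finset.mul_sum, mul_left_comm]

lemma tucker_comp_linearMap (L : ℂ →ₗ[ℝ] ℝ) (Z : MIdx J → ℂ)
    (M : ∀ n, Matrix (Fin (J n)) (Fin (J n)) ℝ) :
    tucker (fun j => L (Z j)) M = fun k => L (tuckerComplex Z M k) := by
  funext k
  simp only [tucker, tuckerComplex, map_sum, ← Complex.real_smul, map_smul, smul_eq_mul]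

lemma sum_prod_mul_prod_of_mulVec_eq_smul {R : Type*} [CommSemiring R]
    (B : ∀ n, Matrix (Fin (J n)) (Fin (J n)) R) {μ : Fin N → R} {v : ∀ n, Fin (J n) → R}
    (hv : ∀ n, B n *ᵥ v n = μ n • v n) (k : MIdx J) :
    ∑ j : MIdx J, (∏ n, B n (k n) (j n)) * ∏ n, v n (j n) = (∏ n, μ n) * ∏ n, v n (k n) := by
  simp_rw [← Finset.prod_mul_distrib]
  rw [← Fintype.prod_sum (fun n x => B n (k n) x * v n x)]
  refine Finset.prod_congr rfl fun n _ => ?_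
  simpa [Matrix.mulVec, dotProduct] using congrFun (hv n) (k n)

lemma exists_tuckerComplex_eq_smul (A : ∀ n, Matrix (Fin (J n)) (Fin (J n)) ℝ)
    (h : ∀ n, specRad (A n) ≠ 0) :
    ∃ (μ : ℂ) (w : MIdx J → ℂ), w ≠ 0 ∧ ‖μ‖ = ∏ n, specRad (A n) ∧ tuckerComplex w A = μ • w := by
  choose μ hμ hnorm using fun n => exists_mem_spectrum_norm_eq_specRad (A n) (h n)
  choose v hv0 hv using fun n =>
    ((A n).map Complex.ofReal).mem_spectrum_iff_exists_mulVec_eq_smul _ |>.1 (hμ n)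
  choose i hi using fun n => Function.ne_iff.1 (hv0 n)
  refine ⟨∏ n, μ n, fun j => ∏ n, v n (j n),
    Function.ne_iff.2 ⟨i, Finset.prod_ne_zero_iff.2 fun n _ => hi n⟩, by simp [hnorm], ?_⟩
  funext k
  simpa [tuckerComplex] using
    sum_prod_mul_prod_of_mulVec_eq_smul (fun n => (A n).map Complex.ofReal) hv k

end TuckerComplex

theorem tendsto_fro_of_prod_specRad_lt_one {N : ℕ} {J : Fin N → ℕ}
    (A : ∀ n, Matrix (Fin (J n)) (Fin (J n)) ℝ) (h : ∏ n, specRad (A n) < 1)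
    {X : ℕ → MIdx J → ℝ} (hX : ∀ t, X (t + 1) = tucker (X t) A) :
    Tendsto (fun t => fro (X t)) atTop (𝓝 0) := by
  obtain ⟨ε, hε, hlt⟩ := Real.exists_pos_prod_add_lt h
  have hentries : ∀ᶠ t in atTop, ∀ n i j, |(A n ^ t) i j| ≤ (specRad (A n) + ε) ^ t :=
    eventually_all.2 fun n => eventually_abs_pow_apply_le (A n) (lt_add_of_pos_right _ hε)
  have hnonneg : 0 ≤ ∏ n, (specRad (A n) + ε) :=
    Finset.prod_nonneg fun n _ => (specRad_nonneg (A n)).trans (le_add_of_nonneg_right hε.le)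
  have hdecay : ∀ k, Tendsto (fun t => X t k) atTop (𝓝 0) := fun k => by
    have hgeom := (tendsto_pow_atTop_nhds_zero_of_lt_one hnonneg hlt).mul_const (∑ j, |X 0 j|)
    rw [zero_mul] at hgeom
    refine squeeze_zero_norm' ?_ hgeom
    filter_upwards [hentries] with t ht
    rw [tucker_iterate A hX t, Real.norm_eq_abs, ← Finset.prod_pow]
    exact abs_tucker_le _ _ ht k
  have hfro := (continuous_fro.tendsto 0).comp (tendsto_pi_nhds.2 hdecay)
  rwa [fro_zero] at hfro

theorem exists_unbounded_of_one_lt_prod_specRad {N : ℕ} {J : Fin N → ℕ}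
    (A : ∀ n, Matrix (Fin (J n)) (Fin (J n)) ℝ) (h : 1 < ∏ n, specRad (A n)) :
    ∃ X : ℕ → MIdx J → ℝ, (∀ t, X (t + 1) = tucker (X t) A) ∧
      ¬BddAbove (Set.range fun t => fro (X t)) := by
  have hρ : ∀ n, specRad (A n) ≠ 0 := fun n =>
    Finset.prod_ne_zero_iff.1 (zero_lt_one.trans h).ne' n (Finset.mem_univ n)
  obtain ⟨μ, w, hw0, hμ, hw⟩ := exists_tuckerComplex_eq_smul A hρ
  let orbit (L : ℂ →ₗ[ℝ] ℝ) (t : ℕ) : MIdx J → ℝ := fun k => L ((μ ^ t • w) k)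
  have horbit (L : ℂ →ₗ[ℝ] ℝ) (t : ℕ) : orbit L (t + 1) = tucker (orbit L t) A := by
    rw [tucker_comp_linearMap, tuckerComplex_smul, hw, smul_smul, ← pow_succ]
  have hw_pos : 0 < ∑ k, ‖w k‖ ^ 2 := by
    obtain ⟨k, hk⟩ := Function.ne_iff.1 hw0
    exact (pow_pos (norm_pos_iff.2 hk) 2).trans_le
      (Finset.single_le_sum (fun k _ => sq_nonneg ‖w k‖) (Finset.mem_univ k))
  have hsq (t : ℕ) : fro (orbit Complex.reLm t) ^ 2 + fro (orbit Complex.imLm t) ^ 2 =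
      (‖μ‖ ^ 2) ^ t * ∑ k, ‖w k‖ ^ 2 := by
    change fro (fun k => ((μ ^ t • w) k).re) ^ 2 + fro (fun k => ((μ ^ t • w) k).im) ^ 2 = _
    rw [fro_re_sq_add_fro_im_sq, Finset.mul_sum]
    simp only [Pi.smul_apply, smul_eq_mul, norm_mul, norm_pow, mul_pow, ← pow_mul, mul_comm]
  have hgrowth : Tendsto (fun t : ℕ => (‖μ‖ ^ 2) ^ t * ∑ k, ‖w k‖ ^ 2) atTop atTop :=
    (tendsto_pow_atTop_atTop_of_one_lt (one_lt_pow₀ (hμ ▸ h) two_ne_zero)).atTop_mul_const hw_pos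
  have hunbounded : ¬BddAbove (Set.range fun t =>
      fro (orbit Complex.reLm t) ^ 2 + fro (orbit Complex.imLm t) ^ 2) := by
    simpa only [hsq] using not_bddAbove_of_tendsto_atTop hgrowth
  rcases not_bddAbove_or_of_not_bddAbove_sq_add_sq (fun _ => fro_nonneg _) (fun _ => fro_nonneg _)
    hunbounded with hre | him
  exacts [⟨_, horbit Complex.reLm, hre⟩, ⟨_, horbit Complex.imLm, him⟩]

/-- for the dynamics `X_{t+1} = X_t ×{A₁,…,A_N}`, if
`∏_n ρ^{(n)} < 1` the equilibrium `0` is asymptotically stable, and if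
`∏_n ρ^{(n)} > 1` it is unstable. -/
theorem tucker_spectral_stability {N : ℕ} {J : Fin N → ℕ}
    (A : ∀ n, Matrix (Fin (J n)) (Fin (J n)) ℝ) :
    ((∏ n, specRad (A n)) < 1 →
      ∀ X : ℕ → MIdx J → ℝ, (∀ t, X (t + 1) = tucker (X t) A) →
        Filter.Tendsto (fun t => fro (X t)) Filter.atTop (nhds 0)) ∧
    (1 < (∏ n, specRad (A n)) →
      ∃ X : ℕ → MIdx J → ℝ, (∀ t, X (t + 1) = tucker (X t) A) ∧
        ∀ M : ℝ, ∃ t, M < fro (X t)) := by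
  refine ⟨fun h X hX => tendsto_fro_of_prod_specRad_lt_one A h hX, fun h => ?_⟩
  obtain ⟨X, hX, hunbounded⟩ := exists_unbounded_of_one_lt_prod_specRad A h
  exact ⟨X, hX, fun M => by simpa using not_bddAbove_iff.1 hunbounded M⟩
end
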